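/- Let ρ_{XB} be a cq-state with X ranging over {0,1}^n, let r ∈ ℕ, and let L be an n×n matrix over the two-element field F₂ with rank(L) ≥ n − r. Let ρ_{X'B} be the cq-state on X'⊗B whose conditional operators are ρ'_{B∧x'} = Σ_{x : Lx = x'} ρ_{B∧x} for x' ∈ {0,1}^n. Then H_min(X'|B)_{ρ_{X'B}} ≥ H_min(X|B)_{ρ_{XB}} − r. -/

import Mathlib

open Matrix Kronecker BigOperators Finset ComplexOrder

/-- Bit strings of length `n`. -/
abbrev BS (n : ℕ) := Fin n → Bool

/-- Embedding of a bit into the field with two elements. -/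
def toZ2 (b : Bool) : ZMod 2 := if b then 1 else 0

/-- Inner product modulo 2 of two bit strings. -/
def ipBool {n : ℕ} (x y : BS n) : Bool := decide ((∑ i, toZ2 (x i) * toZ2 (y i)) = 1)

/-- Multiplication of a bit string by a matrix over F₂. -/
def mulVecBool {n : ℕ} (L : Matrix (Fin n) (Fin n) (ZMod 2)) (x : BS n) : BS n :=
  fun i => decide ((L.mulVec fun j => toZ2 (x j)) i = 1)

/-- The `deor` extractor associated to a family of matrices over F₂. -/
def deor {n m : ℕ} (A : Fin m → Matrix (Fin n) (Fin n) (ZMod 2)) (x y : BS n) : BS m :=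
  fun i => ipBool (mulVecBool (A i) x) y

/-- Trace norm of a complex matrix: `tr √(SᴴS)`. -/
noncomputable def traceNorm {B : Type*} [Fintype B] [DecidableEq B] (S : Matrix B B ℂ) : ℝ :=
  (((Matrix.posSemidef_conjTranspose_mul_self S).1.eigenvectorUnitary.1 *
    diagonal (((↑) : ℝ → ℂ) ∘ (√·) ∘ (Matrix.posSemidef_conjTranspose_mul_self S).1.eigenvalues) *
    (star (Matrix.posSemidef_conjTranspose_mul_self S).1.eigenvectorUnitary : Matrix B B ℂ)).trace).re

/-- Trace distance between two matrices. -/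
noncomputable def traceDist {B : Type*} [Fintype B] [DecidableEq B] (ρ σ : Matrix B B ℂ) : ℝ :=
  (1/2) * traceNorm (ρ - σ)

/-- A density matrix: positive semidefinite with unit trace. -/
def IsDensity {B : Type*} [Fintype B] (ρ : Matrix B B ℂ) : Prop :=
  ρ.PosSemidef ∧ ρ.trace = 1

/-- A cq-state given by its family of (subnormalized) conditional operators. -/
def IsCQ {X B : Type*} [Fintype X] [Fintype B] (ρ : X → Matrix B B ℂ) : Prop :=
  (∀ x, (ρ x).PosSemidef) ∧ (∑ x, (ρ x).trace) = 1

/-- The full matrix `Σ_x |x⟩⟨x| ⊗ ρ_{B∧x}` of a cq-state. -/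
noncomputable def cqMatrix {X B : Type*} [Fintype X] [DecidableEq X] [Fintype B]
    (ρ : X → Matrix B B ℂ) : Matrix (X × B) (X × B) ℂ :=
  ∑ x, (Matrix.single x x (1:ℂ)) ⊗ₖ ρ x

/-- Conditional min-entropy of a cq-state: the sup over density matrices σ and reals w with
`ρ_{B∧x} ≤ 2^{-w}·σ` for all `x` (Loewner order), of `w`; `⊥ = -∞` if no such pair exists. -/
noncomputable def qCondHmin {X B : Type*} [Fintype X] [Fintype B]
    (ρ : X → Matrix B B ℂ) : EReal :=
  sSup {z : EReal | ∃ w : ℝ, z = (w : EReal) ∧ ∃ σ : Matrix B B ℂ, σ.PosSemidef ∧ σ.trace = 1 ∧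
    ∀ x, (((2:ℝ) ^ (-w)) • σ - ρ x).PosSemidef}

/-- The maximally mixed state on `m` qubits. -/
noncomputable def mixed (m : ℕ) : Matrix (BS m) (BS m) ℂ := ((2:ℂ)^m)⁻¹ • 1

/-- A finitely supported probability distribution. -/
def IsDist {α : Type*} [Fintype α] (P : α → ℝ) : Prop := (∀ a, 0 ≤ P a) ∧ ∑ a, P a = 1

/-- Total variation distance. -/
noncomputable def TV {α : Type*} [Fintype α] (Q R : α → ℝ) : ℝ := (1/2) * ∑ a, |Q a - R a|

/-- Min-entropy of a distribution. -/
noncomputable def Hmin {X : Type*} [Fintype X] [Nonempty X] (P : X → ℝ) : ℝ :=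
  - Real.logb 2 (⨆ x, P x)

/-- Conditional min-entropy of a joint distribution. -/
noncomputable def HminCond {X Z : Type*} [Fintype X] [Nonempty X] [Fintype Z]
    (P : X → Z → ℝ) : ℝ :=
  - Real.logb 2 (∑ z, ⨆ x, P x z)

/-- `(k1,k2,ε)` X1-strong two-source extractor (no side information). -/
def IsStrongExt (n1 n2 m : ℕ) (Ext : BS n1 → BS n2 → BS m) (k1 k2 ε : ℝ) : Prop :=
  ∀ (P1 : BS n1 → ℝ) (P2 : BS n2 → ℝ), IsDist P1 → IsDist P2 →
    k1 ≤ Hmin P1 → k2 ≤ Hmin P2 →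
    TV (fun p : BS m × BS n1 => ∑ x2, if Ext p.2 x2 = p.1 then P1 p.2 * P2 x2 else 0)
       (fun p : BS m × BS n1 => ((2:ℝ)^m)⁻¹ * P1 p.2) ≤ ε

/-- `(k1,k2,ε)` X1-strong two-source extractor against classical product-type knowledge. -/
def IsStrongExtCPT (n1 n2 m : ℕ) (Ext : BS n1 → BS n2 → BS m) (k1 k2 ε : ℝ) : Prop :=
  ∀ (Z1 Z2 : Type) [Fintype Z1] [Fintype Z2],
    ∀ (P1 : BS n1 → Z1 → ℝ) (P2 : BS n2 → Z2 → ℝ),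
    IsDist (fun p : BS n1 × Z1 => P1 p.1 p.2) →
    IsDist (fun p : BS n2 × Z2 => P2 p.1 p.2) →
    k1 ≤ HminCond P1 → k2 ≤ HminCond P2 →
    TV (fun q : BS m × BS n1 × Z1 × Z2 =>
          ∑ x2, if Ext q.2.1 x2 = q.1 then P1 q.2.1 q.2.2.1 * P2 x2 q.2.2.2 else 0)
       (fun q : BS m × BS n1 × Z1 × Z2 =>
          ((2:ℝ)^m)⁻¹ * P1 q.2.1 q.2.2.1 * ∑ x2, P2 x2 q.2.2.2) ≤ ε

/-- `(k1,k2,ε)` weak two-source extractor against classical product-type knowledge. -/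
def IsWeakExtCPT (n1 n2 m : ℕ) (Ext : BS n1 → BS n2 → BS m) (k1 k2 ε : ℝ) : Prop :=
  ∀ (Z1 Z2 : Type) [Fintype Z1] [Fintype Z2],
    ∀ (P1 : BS n1 → Z1 → ℝ) (P2 : BS n2 → Z2 → ℝ),
    IsDist (fun p : BS n1 × Z1 => P1 p.1 p.2) →
    IsDist (fun p : BS n2 × Z2 => P2 p.1 p.2) →
    k1 ≤ HminCond P1 → k2 ≤ HminCond P2 →
    TV (fun q : BS m × Z1 × Z2 =>
          ∑ x1, ∑ x2, if Ext x1 x2 = q.1 then P1 x1 q.2.1 * P2 x2 q.2.2 else 0)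
       (fun q : BS m × Z1 × Z2 =>
          ((2:ℝ)^m)⁻¹ * (∑ x1, P1 x1 q.2.1) * ∑ x2, P2 x2 q.2.2) ≤ ε

/-- `(k1,k2,ε)` X1-strong two-source extractor against classical knowledge in the Markov model. -/
def IsStrongExtCMarkov (n1 n2 m : ℕ) (Ext : BS n1 → BS n2 → BS m) (k1 k2 ε : ℝ) : Prop :=
  ∀ (C : Type) [Fintype C], ∀ (P : BS n1 → BS n2 → C → ℝ),
    IsDist (fun q : BS n1 × BS n2 × C => P q.1 q.2.1 q.2.2) →
    (∀ x1 x2 c, P x1 x2 c * (∑ x1', ∑ x2', P x1' x2' c)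
        = (∑ x2', P x1 x2' c) * (∑ x1', P x1' x2 c)) →
    k1 ≤ HminCond (fun x1 c => ∑ x2, P x1 x2 c) →
    k2 ≤ HminCond (fun x2 c => ∑ x1, P x1 x2 c) →
    TV (fun q : BS m × BS n1 × C => ∑ x2, if Ext q.2.1 x2 = q.1 then P q.2.1 x2 q.2.2 else 0)
       (fun q : BS m × BS n1 × C => ((2:ℝ)^m)⁻¹ * ∑ x2, P q.2.1 x2 q.2.2) ≤ ε

/-- The output cq-state `ρ_{Ext(X1,X2) X1 C1 C2}` for product-type quantum side information. -/
noncomputable def qStrongOut {n1 n2 m : ℕ} {C1 C2 : Type}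
    [Fintype C1] [Fintype C2]
    (Ext : BS n1 → BS n2 → BS m)
    (ρ1 : BS n1 → Matrix C1 C1 ℂ) (ρ2 : BS n2 → Matrix C2 C2 ℂ) :
    Matrix (BS m × (BS n1 × C1) × C2) (BS m × (BS n1 × C1) × C2) ℂ :=
  ∑ x1, ∑ x2, (Matrix.single (Ext x1 x2) (Ext x1 x2) (1:ℂ)) ⊗ₖ
    (((Matrix.single x1 x1 (1:ℂ)) ⊗ₖ ρ1 x1) ⊗ₖ ρ2 x2)

/-- `(k1,k2,ε)` X1-strong two-source extractor against quantum product-type knowledge. -/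
def IsStrongExtQPT (n1 n2 m : ℕ) (Ext : BS n1 → BS n2 → BS m) (k1 k2 ε : ℝ) : Prop :=
  ∀ (C1 C2 : Type) [Fintype C1] [DecidableEq C1] [Fintype C2] [DecidableEq C2],
    ∀ (ρ1 : BS n1 → Matrix C1 C1 ℂ) (ρ2 : BS n2 → Matrix C2 C2 ℂ),
    IsCQ ρ1 → IsCQ ρ2 →
    (k1 : EReal) ≤ qCondHmin ρ1 → (k2 : EReal) ≤ qCondHmin ρ2 →
    traceDist (qStrongOut Ext ρ1 ρ2) (mixed m ⊗ₖ (cqMatrix ρ1 ⊗ₖ ∑ x2, ρ2 x2)) ≤ ε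

/-- `(k1,k2,ε)` weak two-source extractor against quantum product-type knowledge. -/
def IsWeakExtQPT (n1 n2 m : ℕ) (Ext : BS n1 → BS n2 → BS m) (k1 k2 ε : ℝ) : Prop :=
  ∀ (C1 C2 : Type) [Fintype C1] [DecidableEq C1] [Fintype C2] [DecidableEq C2],
    ∀ (ρ1 : BS n1 → Matrix C1 C1 ℂ) (ρ2 : BS n2 → Matrix C2 C2 ℂ),
    IsCQ ρ1 → IsCQ ρ2 →
    (k1 : EReal) ≤ qCondHmin ρ1 → (k2 : EReal) ≤ qCondHmin ρ2 →
    traceDist (∑ x1, ∑ x2, (Matrix.single (Ext x1 x2) (Ext x1 x2) (1:ℂ)) ⊗ₖ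
        ((ρ1 x1) ⊗ₖ ρ2 x2))
      (mixed m ⊗ₖ ((∑ x1, ρ1 x1) ⊗ₖ ∑ x2, ρ2 x2)) ≤ ε

/-- `(k1,k2,ε)` X1-strong two-source extractor against quantum knowledge in the Markov model,
in decomposed form. -/
def IsStrongExtQMarkov (n1 n2 m : ℕ) (Ext : BS n1 → BS n2 → BS m) (k1 k2 ε : ℝ) : Prop :=
  ∀ (Z C1 C2 : Type) [Fintype Z] [DecidableEq Z]
      [Fintype C1] [DecidableEq C1] [Fintype C2] [DecidableEq C2],
    ∀ (P : Z → ℝ) (ρ1 : Z → BS n1 → Matrix C1 C1 ℂ) (ρ2 : Z → BS n2 → Matrix C2 C2 ℂ),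
    IsDist P → (∀ z, IsCQ (ρ1 z)) → (∀ z, IsCQ (ρ2 z)) →
    (k1 : EReal) ≤ qCondHmin (fun x1 : BS n1 =>
      ∑ z, P z • (((ρ1 z x1) ⊗ₖ ∑ x2, ρ2 z x2) ⊗ₖ Matrix.single z z (1:ℂ))) →
    (k2 : EReal) ≤ qCondHmin (fun x2 : BS n2 =>
      ∑ z, P z • (((∑ x1, ρ1 z x1) ⊗ₖ ρ2 z x2) ⊗ₖ Matrix.single z z (1:ℂ))) →
    traceDist
      (∑ x1, ∑ x2, ∑ z, P z •
        ((Matrix.single (Ext x1 x2) (Ext x1 x2) (1:ℂ)) ⊗ₖ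
          ((Matrix.single x1 x1 (1:ℂ)) ⊗ₖ
            (((ρ1 z x1) ⊗ₖ ρ2 z x2) ⊗ₖ Matrix.single z z (1:ℂ)))))
      (mixed m ⊗ₖ cqMatrix (fun x1 : BS n1 =>
        ∑ z, P z • (((ρ1 z x1) ⊗ₖ ∑ x2, ρ2 z x2) ⊗ₖ Matrix.single z z (1:ℂ))))
      ≤ ε

/-!
A witness `(w, σ)` for `H_min(X|B) ≥ w` gives `ρ_{B∧x} ≤ 2^{-w} σ` for every `x`; summing
over a fibre of `x ↦ Lx` with at most `2^r` points gives `ρ'_{B∧x'} ≤ 2^{r-w} σ` with the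
same `σ`. Over `F₂` a nonempty fibre of `x ↦ Lx` is a coset of `ker L`, which has
`2^(n - rank L) ≤ 2^r` elements.
-/

lemma AddMonoidHom.card_fiber_le_card_fiber_zero {G M F : Type*} [AddGroup G] [Fintype G]
    [AddMonoid M] [DecidableEq M] [FunLike F G M] [AddMonoidHomClass F G M] (f : F) (y : M) :
    #{g | f g = y} ≤ #{g | f g = 0} := by
  by_cases hy : y ∈ Set.range f
  · exact (AddMonoidHom.card_fiber_eq_of_mem_range f hy ⟨0, map_zero f⟩).le
  · simp_all

lemma Matrix.card_mulVec_fiber_le {m n K : Type*} [Fintype m] [Fintype n] [DecidableEq n]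
    [Field K] [Fintype K] [DecidableEq K] (L : Matrix m n K) (w : m → K) :
    #{v | L *ᵥ v = w} ≤ Fintype.card K ^ (Fintype.card n - L.rank) := by
  classical
  have hker : #{v | L *ᵥ v = 0} = Fintype.card K ^ Module.finrank K L.mulVecLin.ker := by
    rw [← Module.card_eq_pow_finrank, ← Fintype.card_subtype]
    simp only [LinearMap.mem_ker, mulVecLin_apply]
  have hnull := LinearMap.finrank_range_add_finrank_ker L.mulVecLin
  rw [Module.finrank_fintype_fun_eq_card] at hnull
  calc #{v | L *ᵥ v = w} ≤ #{v | L *ᵥ v = 0} :=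
        AddMonoidHom.card_fiber_le_card_fiber_zero L.mulVecLin w
    _ = _ := hker
    _ ≤ _ := Nat.pow_le_pow_right Fintype.card_pos (by rw [Matrix.rank]; omega)

lemma toZ2_bijective : Function.Bijective toZ2 := by decide

lemma decide_eq_one_eq_iff_eq_toZ2 (a : ZMod 2) (b : Bool) : decide (a = 1) = b ↔ a = toZ2 b := by
  revert a b; decide

lemma mulVecBool_eq_iff {n : ℕ} (L : Matrix (Fin n) (Fin n) (ZMod 2)) (x y : BS n) :
    mulVecBool L x = y ↔ L *ᵥ (toZ2 ∘ x) = toZ2 ∘ y := by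
  simp only [funext_iff, mulVecBool, decide_eq_one_eq_iff_eq_toZ2]
  rfl

lemma card_filter_mulVecBool_eq_le {n r : ℕ} (L : Matrix (Fin n) (Fin n) (ZMod 2))
    (hL : n - r ≤ L.rank) (y : BS n) : #{x | mulVecBool L x = y} ≤ 2 ^ r :=
  calc #{x | mulVecBool L x = y} = #{v | L *ᵥ v = toZ2 ∘ y} :=
        Finset.card_equiv (Equiv.arrowCongr (.refl _) (.ofBijective _ toZ2_bijective))
          fun x => by simp only [mem_filter, mem_univ, true_and, mulVecBool_eq_iff]; rfl
    _ ≤ 2 ^ (n - L.rank) := by simpa using L.card_mulVec_fiber_le (toZ2 ∘ y)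
    _ ≤ 2 ^ r := Nat.pow_le_pow_right two_pos (by omega)

lemma Matrix.PosSemidef.smul_sub_sum {ι B : Type*} [Fintype B] {σ : Matrix B B ℂ}
    (hσ : σ.PosSemidef) {ρ : ι → Matrix B B ℂ} {s : Finset ι} {c d : ℝ}
    (hρ : ∀ i ∈ s, (c • σ - ρ i).PosSemidef) (hcd : #s * c ≤ d) :
    (d • σ - ∑ i ∈ s, ρ i).PosSemidef := by
  have hsplit :
      d • σ - ∑ i ∈ s, ρ i = (d - #s * c) • σ + ∑ i ∈ s, (c • σ - ρ i) := by
    rw [Finset.sum_sub_distrib, Finset.sum_const, ← Nat.cast_smul_eq_nsmul ℝ, smul_smul,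
      sub_smul]
    abel
  rw [hsplit]
  exact (hσ.smul (sub_nonneg.mpr hcd)).add (posSemidef_sum s hρ)

lemma coe_le_qCondHmin {X B : Type*} [Fintype X] [Fintype B] {ρ : X → Matrix B B ℂ}
    {w : ℝ} {σ : Matrix B B ℂ} (hσ : σ.PosSemidef) (htr : σ.trace = 1)
    (hρ : ∀ x, (((2:ℝ) ^ (-w)) • σ - ρ x).PosSemidef) : (w : EReal) ≤ qCondHmin ρ :=
  le_sSup ⟨w, rfl, σ, hσ, htr, hρ⟩

theorem qCondHmin_sub_le_qCondHmin_sum_fiber {X Y B : Type*} [Fintype X] [Fintype Y]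
    [DecidableEq Y] [Fintype B] (ρ : X → Matrix B B ℂ) (f : X → Y) {r : ℝ}
    (hf : ∀ y, (#{x | f x = y} : ℝ) ≤ 2 ^ r) :
    qCondHmin ρ - (r : EReal) ≤ qCondHmin (fun y => ∑ x ∈ {x | f x = y}, ρ x) := by
  rw [EReal.sub_le_iff_le_add (.inl (EReal.coe_ne_bot _)) (.inl (EReal.coe_ne_top _))]
  refine sSup_le ?_
  rintro _ ⟨w, rfl, σ, hσ, htr, hρ⟩
  have hscale : (2:ℝ) ^ (-(w - r)) = 2 ^ r * 2 ^ (-w) := by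
    rw [← Real.rpow_add two_pos]; ring_nf
  have hw : ((w - r : ℝ) : EReal) ≤ qCondHmin (fun y => ∑ x ∈ {x | f x = y}, ρ x) :=
    coe_le_qCondHmin hσ htr fun y => hσ.smul_sub_sum (fun x _ => hρ x) <| by
      rw [hscale]; exact mul_le_mul_of_nonneg_right (hf y) (Real.rpow_nonneg zero_le_two _)
  calc (w : EReal) = ((w - r : ℝ) : EReal) + r := by rw [← EReal.coe_add, sub_add_cancel]
    _ ≤ _ := add_le_add_left hw _

theorem stmt1_general {n r : ℕ} {B : Type} [Fintype B]
    (ρ : BS n → Matrix B B ℂ)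
    (L : Matrix (Fin n) (Fin n) (ZMod 2)) (hL : n - r ≤ L.rank) :
    qCondHmin ρ - ((r : ℝ) : EReal)
      ≤ qCondHmin (fun x' : BS n =>
          ∑ x ∈ Finset.univ.filter (fun x : BS n => mulVecBool L x = x'), ρ x) :=
  qCondHmin_sub_le_qCondHmin_sum_fiber ρ (mulVecBool L) fun y => by
    rw [Real.rpow_natCast]; exact_mod_cast card_filter_mulVecBool_eq_le L hL y

theorem stmt1 {n r : ℕ} {B : Type} [Fintype B]
    (ρ : BS n → Matrix B B ℂ) (hρ : IsCQ ρ)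
    (L : Matrix (Fin n) (Fin n) (ZMod 2)) (hL : n - r ≤ L.rank) :
    qCondHmin ρ - ((r : ℝ) : EReal)
      ≤ qCondHmin (fun x' : BS n =>
          ∑ x ∈ Finset.univ.filter (fun x : BS n => mulVecBool L x = x'), ρ x) :=
  stmt1_general ρ L hL
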